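/- arXiv:1701.02404 — 3 statements merged into one kernel-verified Lean document; each statement's English description precedes it below -/
import Mathlib

section
/- Cauchy-Schwarz inequality for tensors with factor min(r,n) (Proposition 2.1 / Remark 2.2): for any complex r×n matrices S = (s_{ℓ,k}) and T = (t_{ℓ,k}) one has |∑_{ℓ=1}^{r} ∑_{k=1}^{n} s_{ℓ,k} t_{ℓ,k}|² ≤ min(r,n) · ∑_{m=1}^{r} ∑_{ℓ=1}^{r} |∑_{k=1}^{n} s_{m,k} t_{ℓ,k}|². -/
/-!
With `A = S Tᵀ`, the left side is `|tr A|²` and the sum on the right is `‖A‖_F²`, while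
`rank A ≤ min r n`. So it suffices that `|tr A|² ≤ rank A · ‖A‖_F²` for every square matrix.
For this, expand each column `w_j` of `A` in an orthonormal basis `b_1, …, b_d` of the column
space, `w_j = ∑_i c_{j,i} b_i`. Then `tr A = ∑_{j,i} c_{j,i} (b_i)_j`, and Cauchy–Schwarz bounds
its square by `(∑_{j,i} |c_{j,i}|²) (∑_{j,i} |(b_i)_j|²) = ‖A‖_F² · d`.
-/

open Module

variable {𝕜 ι κ : Type*} [RCLike 𝕜] [Fintype ι] [Fintype κ]

theorem norm_sum_mul_sq_le (x y : κ → 𝕜) :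
    ‖∑ p, x p * y p‖ ^ 2 ≤ (∑ p, ‖x p‖ ^ 2) * ∑ p, ‖y p‖ ^ 2 := by
  have htriangle : ‖∑ p, x p * y p‖ ≤ ∑ p, ‖x p‖ * ‖y p‖ :=
    (norm_sum_le _ _).trans_eq (by simp only [norm_mul])
  exact (pow_le_pow_left₀ (norm_nonneg _) htriangle 2).trans
    (Finset.sum_mul_sq_le_sq_mul_sq _ _ _)

theorem Orthonormal.sum_sum_norm_apply_sq {b : κ → EuclideanSpace 𝕜 ι} (hb : Orthonormal 𝕜 b) :
    ∑ j, ∑ i, ‖b i j‖ ^ 2 = Fintype.card κ := by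
  rw [Finset.sum_comm]
  simp [← EuclideanSpace.norm_sq_eq, hb.1]

theorem norm_sum_apply_self_sq_le_finrank_mul (V : Submodule 𝕜 (EuclideanSpace 𝕜 ι))
    {w : ι → EuclideanSpace 𝕜 ι} (hw : ∀ j, w j ∈ V) :
    ‖∑ j, w j j‖ ^ 2 ≤ finrank 𝕜 V * ∑ j, ‖w j‖ ^ 2 := by
  set b := stdOrthonormalBasis 𝕜 V
  set c : ι → EuclideanSpace 𝕜 (Fin (finrank 𝕜 V)) := fun j => b.repr ⟨w j, hw j⟩
  have hexpand : ∀ j, w j j = ∑ i, c j i * (b i : EuclideanSpace 𝕜 ι) j := by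
    intro j
    simpa [c] using
      (congrArg (fun v : V => (v : EuclideanSpace 𝕜 ι) j) (b.sum_repr ⟨w j, hw j⟩)).symm
  have hcoeff : ∀ j, ∑ i, ‖c j i‖ ^ 2 = ‖w j‖ ^ 2 := fun j => by
    rw [← EuclideanSpace.norm_sq_eq, b.repr.norm_map, Submodule.coe_norm]
  have hbasis : ∑ j, ∑ i, ‖(b i : EuclideanSpace 𝕜 ι) j‖ ^ 2 = finrank 𝕜 V := by
    simpa using (b.orthonormal.comp_linearIsometry V.subtypeₗᵢ).sum_sum_norm_apply_sq
  calc ‖∑ j, w j j‖ ^ 2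
      = ‖∑ p : ι × Fin (finrank 𝕜 V), c p.1 p.2 * (b p.2 : EuclideanSpace 𝕜 ι) p.1‖ ^ 2 := by
        simp only [hexpand, Fintype.sum_prod_type]
    _ ≤ (∑ p : ι × Fin (finrank 𝕜 V), ‖c p.1 p.2‖ ^ 2) *
          ∑ p : ι × Fin (finrank 𝕜 V), ‖(b p.2 : EuclideanSpace 𝕜 ι) p.1‖ ^ 2 :=
        norm_sum_mul_sq_le _ _
    _ = finrank 𝕜 V * ∑ j, ‖w j‖ ^ 2 := by
        simp only [Fintype.sum_prod_type, hcoeff, hbasis, mul_comm]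

theorem Matrix.norm_trace_sq_le_rank_mul (A : Matrix ι ι 𝕜) :
    ‖A.trace‖ ^ 2 ≤ A.rank * ∑ i, ∑ j, ‖A i j‖ ^ 2 := by
  set w : ι → EuclideanSpace 𝕜 ι := fun j => WithLp.toLp 2 (A.col j)
  have hrank : finrank 𝕜 (Submodule.span 𝕜 (Set.range w)) = A.rank := by
    let e : (ι → 𝕜) ≃ₗ[𝕜] EuclideanSpace 𝕜 ι := (WithLp.linearEquiv 2 𝕜 (ι → 𝕜)).symm
    rw [rank_eq_finrank_span_cols, ← e.finrank_map_eq, Submodule.map_span, ← Set.range_comp]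
    rfl
  have hcols := norm_sum_apply_self_sq_le_finrank_mul (Submodule.span 𝕜 (Set.range w))
    (fun j => Submodule.subset_span ⟨j, rfl⟩)
  rw [hrank] at hcols
  rw [Finset.sum_comm]
  simpa [w, Matrix.trace, EuclideanSpace.norm_sq_eq] using hcols

theorem stmt_0_general (r n : ℕ)
    (S T : Matrix (Fin r) (Fin n) ℂ) :
    ‖∑ ℓ : Fin r, ∑ k : Fin n, S ℓ k * T ℓ k‖ ^ 2 ≤
      ((min r n : ℕ) : ℝ) *
        ∑ m : Fin r, ∑ ℓ : Fin r,
          ‖∑ k : Fin n, S m k * T ℓ k‖ ^ 2 := by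
  have hrank : (S * T.transpose).rank ≤ min r n :=
    (Matrix.rank_mul_le_left _ _).trans (le_min S.rank_le_height S.rank_le_width)
  have htrace := (S * T.transpose).norm_trace_sq_le_rank_mul
  simp only [Matrix.trace, Matrix.diag, Matrix.mul_apply, Matrix.transpose_apply] at htrace
  refine htrace.trans (mul_le_mul_of_nonneg_right (by exact_mod_cast hrank) ?_)
  positivity

/-- Cauchy-Schwarz inequality for tensors with factor `min r n` (Proposition 2.1 /
Remark 2.2): for complex `r × n` matrices `S`, `T`,
`|∑_{ℓ,k} s_{ℓ,k} t_{ℓ,k}|² ≤ min(r,n) · ∑_{m,ℓ} |∑_k s_{m,k} t_{ℓ,k}|²`. -/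
theorem stmt_0 (r n : ℕ) (hr : 0 < r) (hn : 0 < n)
    (S T : Matrix (Fin r) (Fin n) ℂ) :
    ‖∑ ℓ : Fin r, ∑ k : Fin n, S ℓ k * T ℓ k‖ ^ 2 ≤
      ((min r n : ℕ) : ℝ) *
        ∑ m : Fin r, ∑ ℓ : Fin r,
          ‖∑ k : Fin n, S m k * T ℓ k‖ ^ 2 :=
  stmt_0_general r n S T
end

section
/- Cauchy-Schwarz inequality for more general tensors in indexed form (Proposition 7.1 / Remark 7.2; Skoda's Lemme 1): for any a = (a_1,…,a_p) ∈ ℂ^p and any complex p×n matrices B = (b_{ℓ,k}) and C = (c_{ℓ,k}), with q = min(n, p−1), one has |∑_{j=1}^{p} ∑_{ℓ=1}^{p} ∑_{k=1}^{n} conj(a_j)·(a_j b_{ℓ,k} − a_ℓ b_{j,k})·c_{ℓ,k}|² ≤ q · (∑_{j=1}^{p} |a_j|²) · ∑_{ℓ=1}^{p} ∑_{1≤m<j≤p} |∑_{k=1}^{n} (a_m b_{j,k} − a_j b_{m,k})·c_{ℓ,k}|². -/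
/-!
Put `g_ℓ = B C_ℓ` and `h_ℓ = ‖a‖² g_ℓ - ⟪a, g_ℓ⟫ a`. The left-hand sum is `∑_ℓ (h_ℓ)_ℓ`, the trace
of the matrix with columns `h_ℓ`, and Lagrange's identity gives
`‖h_ℓ‖² = ‖a‖² ∑_{m<j} |a_m g_{ℓ,j} - a_j g_{ℓ,m}|²`. Every `h_ℓ` lies in the image `W` of
`x ↦ ‖a‖² B x - ⟪a, B x⟫ a`, which is at most `n`-dimensional and orthogonal to `a`, so
`dim W ≤ q`. If all `h_ℓ` lie in a `d`-dimensional subspace with orthogonal projection `P`, then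
`∑_ℓ (h_ℓ)_ℓ = ∑_ℓ ⟪P e_ℓ, h_ℓ⟫` and `∑_ℓ ‖P e_ℓ‖² ≤ d`, so Cauchy–Schwarz bounds the square of the
trace by `d ∑_ℓ ‖h_ℓ‖²`.
-/

open Finset
open scoped Matrix ComplexConjugate

theorem Finset.sum_sum_eq_two_nsmul_sum_sum_lt {ι M : Type*} [Fintype ι] [LinearOrder ι]
    [AddCommMonoid M] (X : ι → ι → M) (hsymm : ∀ i j, X i j = X j i) (hdiag : ∀ i, X i i = 0) :
    ∑ j, ∑ m, X m j = 2 • ∑ j, ∑ m ∈ univ.filter (· < j), X m j := by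
  have hsplit (m j : ι) : X m j = (if m < j then X m j else 0) + (if j < m then X m j else 0) := by
    rcases lt_trichotomy m j with h | rfl | h
    · simp [h, h.not_gt]
    · simp [hdiag]
    · simp [h, h.not_gt]
  have hswap : ∑ j, ∑ m, (if j < m then X m j else 0) = ∑ j, ∑ m, (if m < j then X m j else 0) := by
    rw [sum_comm]
    simp only [hsymm]
  simp only [sum_filter]
  rw [two_nsmul]
  conv_lhs => enter [2, j, 2, m]; rw [hsplit m j]
  simp only [sum_add_distrib, hswap]

section InnerProductSpace

variable {𝕜 E F ι : Type*} [RCLike 𝕜] [NormedAddCommGroup E] [InnerProductSpace 𝕜 E] [Fintype ι]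

local notation "⟪" x ", " y "⟫" => inner 𝕜 x y

theorem Orthonormal.sum_norm_sq_starProjection_le_finrank {e : ι → E} (he : Orthonormal 𝕜 e)
    (W : Submodule 𝕜 E) [FiniteDimensional 𝕜 W] :
    ∑ i, ‖W.starProjection (e i)‖ ^ 2 ≤ Module.finrank 𝕜 W := by
  let f := stdOrthonormalBasis 𝕜 W
  have parseval (x : E) : ‖W.starProjection x‖ ^ 2 = ∑ j, ‖⟪(f j : E), x⟫‖ ^ 2 := by
    rw [Submodule.starProjection_apply, Submodule.norm_coe, ← f.sum_sq_norm_inner_right]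
    simp only [Submodule.inner_orthogonalProjectionOnto_eq_of_mem_left]
  calc ∑ i, ‖W.starProjection (e i)‖ ^ 2
      = ∑ j, ∑ i, ‖⟪e i, (f j : E)⟫‖ ^ 2 := by
        simp only [parseval, norm_inner_symm]
        exact sum_comm
    _ ≤ ∑ j, ‖(f j : E)‖ ^ 2 := sum_le_sum fun j _ => he.sum_inner_products_le _
    _ = Module.finrank 𝕜 W := by
        simp [Submodule.norm_coe, f.orthonormal.1]

theorem Orthonormal.norm_sum_inner_sq_le {e : ι → E} (he : Orthonormal 𝕜 e)
    (W : Submodule 𝕜 E) [FiniteDimensional 𝕜 W] {h : ι → E} (hW : ∀ i, h i ∈ W) :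
    ‖∑ i, ⟪e i, h i⟫‖ ^ 2 ≤ Module.finrank 𝕜 W * ∑ i, ‖h i‖ ^ 2 := by
  have hproj (i : ι) : ⟪e i, h i⟫ = ⟪W.starProjection (e i), h i⟫ := by
    rw [Submodule.inner_starProjection_left_eq_right,
      Submodule.starProjection_eq_self_iff.mpr (hW i)]
  calc ‖∑ i, ⟪e i, h i⟫‖ ^ 2
      ≤ (∑ i, ‖W.starProjection (e i)‖ * ‖h i‖) ^ 2 := by
        gcongr
        simp only [hproj]
        exact (norm_sum_le _ _).trans (sum_le_sum fun i _ => norm_inner_le_norm _ _)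
    _ ≤ (∑ i, ‖W.starProjection (e i)‖ ^ 2) * ∑ i, ‖h i‖ ^ 2 :=
        sum_mul_sq_le_sq_mul_sq _ _ _
    _ ≤ Module.finrank 𝕜 W * ∑ i, ‖h i‖ ^ 2 := by
        gcongr
        exact he.sum_norm_sq_starProjection_le_finrank W

variable (𝕜) in
/-- `‖a‖²` times the component of `x` orthogonal to `a`, scaled so that no division occurs. -/
def scaledRejection (a : E) : E →ₗ[𝕜] E :=
  ⟪a, a⟫ • LinearMap.id - (innerₛₗ 𝕜 a).smulRight a

theorem scaledRejection_apply (a x : E) :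
    scaledRejection 𝕜 a x = ⟪a, a⟫ • x - ⟪a, x⟫ • a := rfl

theorem scaledRejection_zero : scaledRejection 𝕜 (0 : E) = 0 := by
  ext x
  simp [scaledRejection_apply]

theorem inner_scaledRejection_self (a x : E) : ⟪a, scaledRejection 𝕜 a x⟫ = 0 := by
  rw [scaledRejection_apply, inner_sub_right, inner_smul_right, inner_smul_right, mul_comm,
    sub_self]

theorem range_scaledRejection_le (a : E) :
    LinearMap.range (scaledRejection 𝕜 a) ≤ (𝕜 ∙ a)ᗮ := by
  rintro _ ⟨x, rfl⟩
  exact Submodule.mem_orthogonal_singleton_iff_inner_right.mpr (inner_scaledRejection_self a x)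

theorem finrank_range_scaledRejection_le [FiniteDimensional 𝕜 E] (a : E) :
    Module.finrank 𝕜 (LinearMap.range (scaledRejection 𝕜 a)) ≤ Module.finrank 𝕜 E - 1 := by
  rcases eq_or_ne a 0 with rfl | ha
  · rw [scaledRejection_zero, LinearMap.range_zero, finrank_bot]
    exact Nat.zero_le _
  · have := Submodule.finrank_mono (range_scaledRejection_le (𝕜 := 𝕜) a)
    have := (𝕜 ∙ a).finrank_add_finrank_orthogonal
    rw [finrank_span_singleton ha] at *
    omega

theorem finrank_range_scaledRejection_comp_le [FiniteDimensional 𝕜 E] [AddCommGroup F]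
    [Module 𝕜 F] [FiniteDimensional 𝕜 F] (a : E) (f : F →ₗ[𝕜] E) :
    Module.finrank 𝕜 (LinearMap.range (scaledRejection 𝕜 a ∘ₗ f))
      ≤ min (Module.finrank 𝕜 F) (Module.finrank 𝕜 E - 1) :=
  le_min (LinearMap.finrank_range_le _)
    ((Submodule.finrank_mono (LinearMap.range_comp_le_range f _)).trans
      (finrank_range_scaledRejection_le a))

theorem norm_scaledRejection_sq (a x : E) :
    ‖scaledRejection 𝕜 a x‖ ^ 2 = ‖a‖ ^ 2 * (‖a‖ ^ 2 * ‖x‖ ^ 2 - ‖⟪a, x⟫‖ ^ 2) := by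
  set u := scaledRejection 𝕜 a x with hu
  have hua : ⟪u, a⟫ = 0 := by rw [← inner_conj_symm, inner_scaledRejection_self, map_zero]
  have hux : ⟪u, x⟫ = ‖a‖ ^ 2 * ‖x‖ ^ 2 - ‖⟪a, x⟫‖ ^ 2 := by
    rw [hu, scaledRejection_apply, inner_sub_left, inner_smul_left, inner_smul_left,
      inner_self_eq_norm_sq_to_K, inner_self_eq_norm_sq_to_K, RCLike.conj_mul]
    simp [← map_pow]
  have huu : ⟪u, u⟫ = ⟪a, a⟫ * ⟪u, x⟫ :=
    calc ⟪u, u⟫ = ⟪u, ⟪a, a⟫ • x - ⟪a, x⟫ • a⟫ := rfl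
      _ = ⟪a, a⟫ * ⟪u, x⟫ := by
        rw [inner_sub_right, inner_smul_right, inner_smul_right, hua, mul_zero, sub_zero]
  rw [inner_self_eq_norm_sq_to_K, inner_self_eq_norm_sq_to_K, hux] at huu
  exact_mod_cast huu

end InnerProductSpace

namespace EuclideanSpace

variable {𝕜 ι κ : Type*} [RCLike 𝕜] [Fintype ι]

local notation "⟪" x ", " y "⟫" => inner 𝕜 x y

theorem norm_sum_apply_self_sq_le (W : Submodule 𝕜 (EuclideanSpace 𝕜 ι))
    {h : ι → EuclideanSpace 𝕜 ι} (hW : ∀ i, h i ∈ W) :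
    ‖∑ i, h i i‖ ^ 2 ≤ Module.finrank 𝕜 W * ∑ i, ‖h i‖ ^ 2 := by
  simpa only [basisFun_inner] using (basisFun ι 𝕜).orthonormal.norm_sum_inner_sq_le W hW

theorem lagrange_identity [LinearOrder ι] (a x : EuclideanSpace 𝕜 ι) :
    ‖a‖ ^ 2 * ‖x‖ ^ 2 - ‖⟪a, x⟫‖ ^ 2
      = ∑ j, ∑ m ∈ univ.filter (· < j), ‖a m * x j - a j * x m‖ ^ 2 := by
  have hexpand (m j : ι) : ‖a m * x j - a j * x m‖ ^ 2 = ‖a m‖ ^ 2 * ‖x j‖ ^ 2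
      + ‖a j‖ ^ 2 * ‖x m‖ ^ 2 - 2 * RCLike.re (conj (a m) * x m * (conj (x j) * a j)) := by
    rw [@norm_sub_sq 𝕜, RCLike.inner_apply, norm_mul, norm_mul, map_mul (starRingEnd 𝕜)]
    ring_nf
  have hcross : ∑ j, ∑ m, RCLike.re (conj (a m) * x m * (conj (x j) * a j)) = ‖⟪a, x⟫‖ ^ 2 := by
    have : ⟪a, x⟫ * conj ⟪a, x⟫ = ∑ j, ∑ m, conj (a m) * x m * (conj (x j) * a j) := by
      rw [inner_conj_symm, PiLp.inner_apply, PiLp.inner_apply, sum_mul_sum, sum_comm]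
      simp only [RCLike.inner_apply, mul_comm]
    calc ∑ j, ∑ m, RCLike.re (conj (a m) * x m * (conj (x j) * a j))
        = RCLike.re (⟪a, x⟫ * conj ⟪a, x⟫) := by simp only [this, map_sum]
      _ = ‖⟪a, x⟫‖ ^ 2 := by rw [RCLike.mul_conj, ← RCLike.ofReal_pow, RCLike.ofReal_re]
  have hfull : ∑ j, ∑ m, ‖a m * x j - a j * x m‖ ^ 2 = 2 * (‖a‖ ^ 2 * ‖x‖ ^ 2 - ‖⟪a, x⟫‖ ^ 2) := by
    simp only [hexpand, sum_sub_distrib, sum_add_distrib, ← mul_sum, ← sum_mul,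
      ← norm_sq_eq, hcross]
    ring
  rw [sum_sum_eq_two_nsmul_sum_sum_lt _ (fun m j => by rw [norm_sub_rev]) (fun j => by simp),
    nsmul_eq_mul, Nat.cast_ofNat] at hfull
  linarith

theorem scaledRejection_apply_ofLp (a x : EuclideanSpace 𝕜 ι) (i : ι) :
    scaledRejection 𝕜 a x i = (∑ j, conj (a j) * a j) * x i - (∑ j, conj (a j) * x j) * a i := by
  simp only [scaledRejection_apply, PiLp.sub_apply, PiLp.smul_apply, smul_eq_mul,
    PiLp.inner_apply, RCLike.inner_apply, mul_comm]

variable [Fintype κ]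

theorem sum_conj_mul_sub_mul_eq_sum_scaledRejection_apply (a : ι → 𝕜) (B C : Matrix ι κ 𝕜) :
    ∑ j, ∑ ℓ, ∑ k, conj (a j) * (a j * B ℓ k - a ℓ * B j k) * C ℓ k
      = ∑ ℓ, scaledRejection 𝕜 (WithLp.toLp 2 a) (WithLp.toLp 2 (B *ᵥ C ℓ)) ℓ := by
  rw [sum_comm]
  refine sum_congr rfl fun ℓ _ => ?_
  simp only [scaledRejection_apply_ofLp, Matrix.mulVec, dotProduct, sum_mul]
  simp only [mul_sum, sum_mul, ← sum_sub_distrib]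
  refine sum_congr rfl fun j _ => sum_congr rfl fun k _ => ?_
  ring

theorem norm_scaledRejection_mulVec_sq [LinearOrder ι] (a : ι → 𝕜) (B : Matrix ι κ 𝕜)
    (v : κ → 𝕜) :
    ‖scaledRejection 𝕜 (WithLp.toLp 2 a) (WithLp.toLp 2 (B *ᵥ v))‖ ^ 2 = (∑ j, ‖a j‖ ^ 2) *
      ∑ j, ∑ m ∈ univ.filter (· < j), ‖∑ k, (a m * B j k - a j * B m k) * v k‖ ^ 2 := by
  rw [norm_scaledRejection_sq, lagrange_identity, norm_sq_eq]
  simp only [Matrix.mulVec, dotProduct, mul_sum, ← sum_sub_distrib, sub_mul, mul_assoc]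

end EuclideanSpace

theorem stmt_4_general (p n : ℕ)
    (a : Fin p → ℂ) (B C : Matrix (Fin p) (Fin n) ℂ) :
    (‖∑ j : Fin p, ∑ ℓ : Fin p, ∑ k : Fin n,
        (starRingEnd ℂ) (a j) * (a j * B ℓ k - a ℓ * B j k) * C ℓ k‖) ^ 2 ≤
      ((min n (p - 1) : ℕ) : ℝ) * (∑ j : Fin p, (‖a j‖) ^ 2) *
        ∑ ℓ : Fin p, ∑ j : Fin p, ∑ m ∈ Finset.univ.filter (fun m : Fin p => m < j),
          (‖∑ k : Fin n,
            (a m * B j k - a j * B m k) * C ℓ k‖) ^ 2 := by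
  set R := scaledRejection ℂ (WithLp.toLp 2 a)
  set W := LinearMap.range (R ∘ₗ Matrix.toLpLin 2 2 B)
  have hW (ℓ : Fin p) : R (WithLp.toLp 2 (B *ᵥ C ℓ)) ∈ W := ⟨WithLp.toLp 2 (C ℓ), rfl⟩
  have hdim : Module.finrank ℂ W ≤ min n (p - 1) := by
    simpa using finrank_range_scaledRejection_comp_le (WithLp.toLp 2 a) (Matrix.toLpLin 2 2 B)
  rw [EuclideanSpace.sum_conj_mul_sub_mul_eq_sum_scaledRejection_apply]
  calc _ ≤ Module.finrank ℂ W * ∑ ℓ, ‖R (WithLp.toLp 2 (B *ᵥ C ℓ))‖ ^ 2 :=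
        EuclideanSpace.norm_sum_apply_self_sq_le W hW
    _ ≤ (min n (p - 1) : ℕ) * ∑ ℓ, ‖R (WithLp.toLp 2 (B *ᵥ C ℓ))‖ ^ 2 := by gcongr
    _ = _ := by simp only [R, EuclideanSpace.norm_scaledRejection_mulVec_sq, ← mul_sum, mul_assoc]

/-- Cauchy-Schwarz inequality for more general tensors, indexed form (Proposition 7.1 /
Remark 7.2; Skoda's Lemme 1): for `a ∈ ℂ^p` and complex `p × n` matrices `B`, `C`,
with `q = min(n, p−1)`,
`|∑_{j,ℓ,k} conj(a_j)(a_j b_{ℓ,k} − a_ℓ b_{j,k}) c_{ℓ,k}|²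
  ≤ q (∑_j |a_j|²) ∑_ℓ ∑_{m<j} |∑_k (a_m b_{j,k} − a_j b_{m,k}) c_{ℓ,k}|²`. -/
theorem stmt_4 (p n : ℕ) (hp : 2 ≤ p) (hn : 0 < n)
    (a : Fin p → ℂ) (B C : Matrix (Fin p) (Fin n) ℂ) :
    (‖∑ j : Fin p, ∑ ℓ : Fin p, ∑ k : Fin n,
        (starRingEnd ℂ) (a j) * (a j * B ℓ k - a ℓ * B j k) * C ℓ k‖) ^ 2 ≤
      ((min n (p - 1) : ℕ) : ℝ) * (∑ j : Fin p, (‖a j‖) ^ 2) *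
        ∑ ℓ : Fin p, ∑ j : Fin p, ∑ m ∈ Finset.univ.filter (fun m : Fin p => m < j),
          (‖∑ k : Fin n,
            (a m * B j k - a j * B m k) * C ℓ k‖) ^ 2 :=
  stmt_4_general p n a B C
end

section
/- Wedge-product form of the Cauchy-Schwarz inequality for more general tensors (Proposition 7.1 / Remark 7.2): for any a = (a_1,…,a_p) ∈ ℂ^p and any complex p×n matrices B = (b_{ℓ,k}) and C = (c_{ℓ,k}), with q = min(n, p−1), one has |∑_{1≤j<ℓ≤p} ∑_{k=1}^{n} (a_j b_{ℓ,k} − a_ℓ b_{j,k}) · conj(a_j c_{ℓ,k} − a_ℓ c_{j,k})|² ≤ q · (∑_{j=1}^{p} |a_j|²) · ∑_{ℓ=1}^{p} ∑_{1≤m<j≤p} |∑_{k=1}^{n} (a_m b_{j,k} − a_j b_{m,k}) · conj(c_{ℓ,k})|². -/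
/-!
Put `t = ‖a‖²`, `Q = t • 1 - a a*` and `W = Q B C*`. The Binet–Cauchy identity, halved because the
summands are symmetric in the pair of indices, turns the left-hand sum into `tr W`, and turns `t`
times the right-hand sum into `∑ |W j ℓ|²`, one column `z` of `B C*` at a time (`‖Q z‖² = t |a ∧ z|²`).
As `Q a = 0`, `rank W ≤ min n (p - 1)`. Finally `|tr W|² ≤ rank W · ∑ |W j ℓ|²` for every square
matrix: in an orthonormal basis `v` of the range of `W` the trace is the sum of the `rank W` numbers
`⟪v i, W v i⟫`, so Cauchy–Schwarz and Bessel's inequality for the rows of `W` apply.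
-/

open Finset Matrix Module

theorem Finset.sum_sum_eq_two_nsmul_sum_sum_filter_lt {ι M : Type*} [Fintype ι] [LinearOrder ι]
    [AddCommMonoid M] {f : ι → ι → M} (hsymm : ∀ i j, f i j = f j i) (hdiag : ∀ i, f i i = 0) :
    ∑ j, ∑ i, f i j = 2 • ∑ j, ∑ i ∈ univ.filter (· < j), f i j := by
  have hsplit : ∀ i j, f i j = (if i < j then f i j else 0) + (if j < i then f j i else 0) := by
    intro i j
    rcases lt_trichotomy i j with h | rfl | h
    · simp [h, h.not_gt]
    · simp [hdiag]
    · simp [h, h.not_gt, hsymm i j]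
  simp_rw [sum_filter, two_nsmul]
  conv_lhs => enter [2, j, 2, i]; rw [hsplit]
  simp_rw [sum_add_distrib]
  rw [sum_comm (f := fun j i => if j < i then f j i else 0)]

theorem binet_cauchy {ι R : Type*} [Fintype ι] [CommRing R] (u x v y : ι → R) :
    ∑ j, ∑ i, (u i * x j - u j * x i) * (v i * y j - v j * y i) =
      2 * ((u ⬝ᵥ v) * (x ⬝ᵥ y) - (u ⬝ᵥ y) * (x ⬝ᵥ v)) := by
  have hexpand : ∀ i j, (u i * x j - u j * x i) * (v i * y j - v j * y i) =
      x j * y j * (u i * v i) - x j * v j * (u i * y i) - u j * y j * (x i * v i) +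
        u j * v j * (x i * y i) := fun i j => by ring
  simp only [hexpand, sum_add_distrib, sum_sub_distrib, ← sum_mul_sum, dotProduct]
  ring

theorem Matrix.rank_le_card_sub_one_of_mulVec_eq_zero {K m n : Type*} [Field K] [Fintype m]
    [Fintype n] {A : Matrix m n K} {v : n → K} (hv : v ≠ 0) (hAv : A *ᵥ v = 0) :
    A.rank ≤ Fintype.card n - 1 := by
  have hker : 0 < finrank K (LinearMap.ker A.mulVecLin) :=
    finrank_pos_iff_exists_ne_zero.mpr ⟨⟨v, hAv⟩, fun h => hv (congrArg Subtype.val h)⟩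
  have := A.mulVecLin.finrank_range_add_finrank_ker
  rw [finrank_fintype_fun_eq_card] at this
  rw [Matrix.rank]
  omega

section TraceRank

variable {𝕜 ι : Type*} [RCLike 𝕜] [Fintype ι] [DecidableEq ι]

theorem Matrix.sum_norm_sq_toEuclideanLin_le {κ ι' : Type*} [Fintype κ] [Fintype ι']
    {v : κ → EuclideanSpace 𝕜 ι} (hv : Orthonormal 𝕜 v) (W : Matrix ι' ι 𝕜) :
    ∑ i, ‖toEuclideanLin W (v i)‖ ^ 2 ≤ ∑ j, ∑ m, ‖W j m‖ ^ 2 := by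
  have hrow : ∀ x : EuclideanSpace 𝕜 ι, ∀ j,
      (toEuclideanLin W x).ofLp j = inner 𝕜 (WithLp.toLp 2 (star (W j))) x := fun x j => by
    rw [EuclideanSpace.inner_eq_star_dotProduct, star_star, dotProduct_comm]
    rfl
  simp_rw [EuclideanSpace.norm_sq_eq, hrow]
  rw [sum_comm]
  gcongr with j
  simp_rw [norm_inner_symm (WithLp.toLp 2 _) (v _)]
  refine (hv.sum_inner_products_le _).trans_eq ?_
  simp [EuclideanSpace.norm_sq_eq]

theorem Matrix.norm_trace_sq_le_rank_mul_sum_norm_sq (W : Matrix ι ι 𝕜) :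
    ‖W.trace‖ ^ 2 ≤ W.rank * ∑ i, ∑ j, ‖W i j‖ ^ 2 := by
  set T := toEuclideanLin W
  set V := LinearMap.range T
  let b := stdOrthonormalBasis 𝕜 V
  have hv : Orthonormal 𝕜 (fun i => (b i : EuclideanSpace 𝕜 ι)) :=
    b.orthonormal.comp_linearIsometry V.subtypeₗᵢ
  have hrank : W.rank = finrank 𝕜 V :=
    W.rank_eq_finrank_range_toLin (EuclideanSpace.basisFun ι 𝕜).toBasis
      (EuclideanSpace.basisFun ι 𝕜).toBasis
  have htrace : W.trace = ∑ i, inner 𝕜 (b i : EuclideanSpace 𝕜 ι) (T (b i)) := by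
    rw [← LinearMap.toMatrix_toLin (EuclideanSpace.basisFun ι 𝕜).toBasis
      (EuclideanSpace.basisFun ι 𝕜).toBasis W, ← LinearMap.trace_eq_matrix_trace,
      ← toEuclideanLin_eq_toLin_orthonormal,
      ← LinearMap.trace_restrict_eq_of_forall_mem V T (LinearMap.mem_range_self T),
      LinearMap.trace_eq_sum_inner _ b]
    rfl
  have hnorm : ‖W.trace‖ ≤ ∑ i, ‖T (b i)‖ := by
    rw [htrace]
    refine (norm_sum_le _ _).trans (sum_le_sum fun i _ => ?_)
    simpa [hv.1 i] using norm_inner_le_norm (𝕜 := 𝕜) (b i : EuclideanSpace 𝕜 ι) (T (b i))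
  calc ‖W.trace‖ ^ 2 ≤ (∑ i, ‖T (b i)‖) ^ 2 := pow_le_pow_left₀ (norm_nonneg _) hnorm 2
    _ ≤ finrank 𝕜 V * ∑ i, ‖T (b i)‖ ^ 2 := by
      simpa using sq_sum_le_card_mul_sum_sq (s := univ) (f := fun i => ‖T (b i)‖)
    _ ≤ W.rank * ∑ i, ∑ j, ‖W i j‖ ^ 2 := by
      rw [hrank]
      gcongr
      exact W.sum_norm_sq_toEuclideanLin_le hv

end TraceRank

section ScaledOrthProj

variable {ι R : Type*} [Fintype ι] [DecidableEq ι]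

/-- For `u : ι → 𝕜` this is `‖u‖²` times the orthogonal projection onto `u^⊥`; the scaling avoids
dividing by `‖u‖²` and lets `u = 0` go through without a special case. -/
def scaledOrthProj [CommRing R] [StarRing R] (u : ι → R) : Matrix ι ι R :=
  (star u ⬝ᵥ u) • 1 - vecMulVec u (star u)

variable [CommRing R] [StarRing R]

theorem scaledOrthProj_mulVec (u x : ι → R) :
    scaledOrthProj u *ᵥ x = (star u ⬝ᵥ u) • x - (star u ⬝ᵥ x) • u := by
  rw [scaledOrthProj, sub_mulVec, smul_mulVec, one_mulVec, vecMulVec_mulVec, op_smul_eq_smul]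

-- `Q = scaledOrthProj u` is Hermitian with `Q * Q = (star u ⬝ᵥ u) • Q`.
theorem dotProduct_star_scaledOrthProj_mulVec (u x : ι → R) :
    scaledOrthProj u *ᵥ x ⬝ᵥ star (scaledOrthProj u *ᵥ x) =
      (star u ⬝ᵥ u) * (scaledOrthProj u *ᵥ x ⬝ᵥ star x) := by
  have hu : u ⬝ᵥ star u = star u ⬝ᵥ u := dotProduct_comm _ _
  have hx : x ⬝ᵥ star u = star u ⬝ᵥ x := dotProduct_comm _ _
  have ht : star (star u ⬝ᵥ u) = star u ⬝ᵥ u := (star_dotProduct u u).symm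
  simp only [scaledOrthProj_mulVec, star_sub, star_smul, sub_dotProduct, dotProduct_sub,
    smul_dotProduct, dotProduct_smul, smul_eq_mul, hu, hx, ht]
  ring

theorem sum_sum_filter_lt_mul_star_eq_dotProduct [IsAddTorsionFree R] [LinearOrder ι]
    (u x y : ι → R) :
    ∑ j, ∑ i ∈ univ.filter (· < j), (u i * x j - u j * x i) * star (u i * y j - u j * y i) =
      scaledOrthProj u *ᵥ x ⬝ᵥ star y := by
  refine nsmul_right_injective two_ne_zero ?_
  have hsymm : ∀ i j, (u i * x j - u j * x i) * star (u i * y j - u j * y i) =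
      (u j * x i - u i * x j) * star (u j * y i - u i * y j) := fun i j => by
    rw [← neg_sub (u i * x j), ← neg_sub (u i * y j), star_neg, neg_mul_neg]
  dsimp only
  rw [← sum_sum_eq_two_nsmul_sum_sum_filter_lt hsymm (fun i => by simp)]
  simp only [star_sub, star_mul']
  refine (binet_cauchy u x (star u) (star y)).trans ?_
  rw [scaledOrthProj_mulVec, sub_dotProduct, smul_dotProduct, smul_dotProduct,
    smul_eq_mul, smul_eq_mul, two_nsmul, dotProduct_comm u (star u), dotProduct_comm x (star u)]
  ring

theorem trace_scaledOrthProj_mul_mul_conjTranspose [IsAddTorsionFree R] [LinearOrder ι]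
    {m : Type*} [Fintype m] (u : ι → R) (B C : Matrix ι m R) :
    (scaledOrthProj u * B * Cᴴ).trace =
      ∑ ℓ, ∑ j ∈ univ.filter (· < ℓ), ∑ k,
        (u j * B ℓ k - u ℓ * B j k) * star (u j * C ℓ k - u ℓ * C j k) := by
  have htrace : (scaledOrthProj u * B * Cᴴ).trace =
      ∑ k, scaledOrthProj u *ᵥ (fun i => B i k) ⬝ᵥ star (fun i => C i k) := by
    simp only [trace, Matrix.diag, mul_apply, conjTranspose_apply, mulVec, dotProduct, sum_mul,
      Pi.star_apply]
    rw [sum_comm]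
  rw [htrace, ← sum_congr rfl fun k _ =>
    sum_sum_filter_lt_mul_star_eq_dotProduct u (fun i => B i k) (fun i => C i k), sum_comm]
  exact sum_congr rfl fun ℓ _ => sum_comm

theorem rank_scaledOrthProj_le {K : Type*} [Field K] [StarRing K] (u : ι → K) :
    (scaledOrthProj u).rank ≤ Fintype.card ι - 1 := by
  rcases eq_or_ne u 0 with rfl | hu
  · simp [scaledOrthProj, rank_zero]
  · exact rank_le_card_sub_one_of_mulVec_eq_zero hu (by rw [scaledOrthProj_mulVec, sub_self])

theorem sum_norm_sq_scaledOrthProj_mulVec {𝕜 : Type*} [RCLike 𝕜] [LinearOrder ι] (u z : ι → 𝕜) :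
    ∑ j, ‖(scaledOrthProj u *ᵥ z) j‖ ^ 2 =
      (∑ i, ‖u i‖ ^ 2) * ∑ j, ∑ i ∈ univ.filter (· < j), ‖u i * z j - u j * z i‖ ^ 2 := by
  apply RCLike.ofReal_injective (K := 𝕜)
  push_cast
  simp_rw [← RCLike.mul_conj, RCLike.star_def.symm]
  change scaledOrthProj u *ᵥ z ⬝ᵥ star (scaledOrthProj u *ᵥ z) = (u ⬝ᵥ star u) * _
  rw [dotProduct_star_scaledOrthProj_mulVec, sum_sum_filter_lt_mul_star_eq_dotProduct,
    dotProduct_comm u]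

end ScaledOrthProj

theorem stmt_5_general (p n : ℕ) (a : Fin p → ℂ) (B C : Matrix (Fin p) (Fin n) ℂ) :
    ‖(∑ ℓ : Fin p, ∑ j ∈ Finset.univ.filter (fun j : Fin p => j < ℓ),
        ∑ k : Fin n, (a j * B ℓ k - a ℓ * B j k) *
          (starRingEnd ℂ) (a j * C ℓ k - a ℓ * C j k))‖ ^ 2 ≤
      ((min n (p - 1) : ℕ) : ℝ) * (∑ j : Fin p, ‖a j‖ ^ 2) *
        ∑ ℓ : Fin p, ∑ j : Fin p, ∑ m ∈ Finset.univ.filter (fun m : Fin p => m < j),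
          ‖(∑ k : Fin n,
            (a m * B j k - a j * B m k) * (starRingEnd ℂ) (C ℓ k))‖ ^ 2 := by
  set W := scaledOrthProj a * B * Cᴴ
  have htrace := trace_scaledOrthProj_mul_mul_conjTranspose a B C
  simp only [← starRingEnd_apply] at htrace
  have hentry : ∀ ℓ j m, ∑ k, (a m * B j k - a j * B m k) * (starRingEnd ℂ) (C ℓ k) =
      a m * (B * Cᴴ) j ℓ - a j * (B * Cᴴ) m ℓ := fun ℓ j m => by
    simp only [mul_apply, conjTranspose_apply, starRingEnd_apply, sub_mul, sum_sub_distrib,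
      mul_sum, mul_assoc]
  have hnormSq : ∑ j, ∑ ℓ, ‖W j ℓ‖ ^ 2 = (∑ j, ‖a j‖ ^ 2) *
      ∑ ℓ, ∑ j, ∑ m ∈ univ.filter (· < j),
        ‖∑ k, (a m * B j k - a j * B m k) * (starRingEnd ℂ) (C ℓ k)‖ ^ 2 := by
    rw [sum_comm, mul_sum]
    refine sum_congr rfl fun ℓ _ => ?_
    simp_rw [hentry, ← sum_norm_sq_scaledOrthProj_mulVec a (fun j => (B * Cᴴ) j ℓ), W,
      Matrix.mul_assoc]
    rfl
  have hrank : W.rank ≤ min n (p - 1) :=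
    le_min ((rank_mul_le_right _ _).trans (rank_le_height _))
      ((rank_mul_le_left _ _).trans ((rank_mul_le_left _ _).trans
        (by simpa using rank_scaledOrthProj_le a)))
  rw [← htrace, mul_assoc, ← hnormSq]
  calc ‖W.trace‖ ^ 2 ≤ W.rank * ∑ j, ∑ ℓ, ‖W j ℓ‖ ^ 2 :=
        W.norm_trace_sq_le_rank_mul_sum_norm_sq
    _ ≤ (min n (p - 1) : ℕ) * ∑ j, ∑ ℓ, ‖W j ℓ‖ ^ 2 := by gcongr

/-- Wedge-product form of the Cauchy-Schwarz inequality for more general tensors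
(Proposition 7.1 / Remark 7.2): for `a ∈ ℂ^p` and complex `p × n` matrices `B`, `C`,
with `q = min(n, p−1)`,
`|∑_{j<ℓ} ∑_k (a_j b_{ℓ,k} − a_ℓ b_{j,k}) conj(a_j c_{ℓ,k} − a_ℓ c_{j,k})|²
  ≤ q (∑_j |a_j|²) ∑_ℓ ∑_{m<j} |∑_k (a_m b_{j,k} − a_j b_{m,k}) conj(c_{ℓ,k})|²`. -/
theorem stmt_5 (p n : ℕ) (hp : 2 ≤ p) (hn : 0 < n)
    (a : Fin p → ℂ) (B C : Matrix (Fin p) (Fin n) ℂ) :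
    ‖(∑ ℓ : Fin p, ∑ j ∈ Finset.univ.filter (fun j : Fin p => j < ℓ),
        ∑ k : Fin n, (a j * B ℓ k - a ℓ * B j k) *
          (starRingEnd ℂ) (a j * C ℓ k - a ℓ * C j k))‖ ^ 2 ≤
      ((min n (p - 1) : ℕ) : ℝ) * (∑ j : Fin p, ‖a j‖ ^ 2) *
        ∑ ℓ : Fin p, ∑ j : Fin p, ∑ m ∈ Finset.univ.filter (fun m : Fin p => m < j),
          ‖(∑ k : Fin n,
            (a m * B j k - a j * B m k) * (starRingEnd ℂ) (C ℓ k))‖ ^ 2 :=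
  stmt_5_general p n a B C
end
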